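/- Define, for u,v ∈ ℂ with uv ≠ 1, uv ≠ −1 and (uv)⁵ ≠ 1, E(u,v) = [(1−u²v)³(1−uv²)³ − (uv)⁴(1−u)³(1−v)³]/[(1−uv)(1−(uv)²)] − ((uv)²/2)·[(1−u)³(1−v)³/(1−uv) − (1+u)³(1+v)³/(1+uv)] + 64·(uv)⁵·(1+uv+(uv)²)(1+(uv)²)·((uv−1)/((uv)⁵−1))². Then for all u, v ∈ ℂ with u ≠ 0, v ≠ 0, uv ≠ 1, uv ≠ −1 and (uv)⁵ ≠ 1, one has E(u,v) = (uv)⁶ · E(u⁻¹, v⁻¹). -/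

import Mathlib

/-!
Write `w = u v`. The last summand of `E` depends on `w` alone and is invariant by itself under
`w ↦ w⁻¹` with weight `w⁶`. The first two summands are not: inverting `u, v` changes them by
`∓ w² (1 - u)³ (1 - v)³ / (1 - w)` respectively, and these two defects cancel.
-/

/-- The stringy E-function of the moduli space N (Theorem 1.1). -/
noncomputable def Est (u v : ℂ) : ℂ :=
  ((1 - u ^ 2 * v) ^ 3 * (1 - u * v ^ 2) ^ 3
      - (u * v) ^ 4 * (1 - u) ^ 3 * (1 - v) ^ 3)
    / ((1 - u * v) * (1 - (u * v) ^ 2))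
  - (u * v) ^ 2 / 2 *
      ((1 - u) ^ 3 * (1 - v) ^ 3 / (1 - u * v)
        - (1 + u) ^ 3 * (1 + v) ^ 3 / (1 + u * v))
  + 64 * (u * v) ^ 5 * (1 + u * v + (u * v) ^ 2) * (1 + (u * v) ^ 2)
      * ((u * v - 1) / ((u * v) ^ 5 - 1)) ^ 2

namespace Est

section Terms

variable {K : Type*} [Field K]

def term₁ (u v : K) : K :=
  ((1 - u ^ 2 * v) ^ 3 * (1 - u * v ^ 2) ^ 3
      - (u * v) ^ 4 * (1 - u) ^ 3 * (1 - v) ^ 3)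
    / ((1 - u * v) * (1 - (u * v) ^ 2))

def term₂ (u v : K) : K :=
  - (u * v) ^ 2 / 2 *
      ((1 - u) ^ 3 * (1 - v) ^ 3 / (1 - u * v)
        - (1 + u) ^ 3 * (1 + v) ^ 3 / (1 + u * v))

def term₃ (w : K) : K :=
  64 * w ^ 5 * (1 + w + w ^ 2) * (1 + w ^ 2) * ((w - 1) / (w ^ 5 - 1)) ^ 2

theorem term₁_duality (u v : K) (hu : u ≠ 0) (hv : v ≠ 0) (h1 : u * v ≠ 1)
    (h2 : u * v ≠ -1) :
    (u * v) ^ 6 * term₁ u⁻¹ v⁻¹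
      = term₁ u v - (u * v) ^ 2 * (1 - u) ^ 3 * (1 - v) ^ 3 / (1 - u * v) := by
  have hsq : u ^ 2 * v ^ 2 ≠ 1 := by
    rw [← mul_pow]
    exact sq_ne_one_iff.mpr ⟨h1, h2⟩
  simp only [term₁]
  field_simp
  ring

theorem term₂_duality [NeZero (2 : K)] (u v : K) (hu : u ≠ 0) (hv : v ≠ 0) (h1 : u * v ≠ 1)
    (h2 : u * v ≠ -1) :
    (u * v) ^ 6 * term₂ u⁻¹ v⁻¹
      = term₂ u v + (u * v) ^ 2 * (1 - u) ^ 3 * (1 - v) ^ 3 / (1 - u * v) := by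
  have hb : u * v + 1 ≠ 0 := by rwa [ne_eq, add_eq_zero_iff_eq_neg]
  have hb' : 1 + u * v ≠ 0 := by rwa [add_comm]
  simp only [term₂]
  field_simp
  ring

-- When `w ^ 5 = 1` both sides vanish through the junk value of division by zero.
theorem term₃_duality (w : K) : w ^ 6 * term₃ w⁻¹ = term₃ w := by
  rcases eq_or_ne w 0 with rfl | hw
  · simp [term₃]
  rcases eq_or_ne (w ^ 5) 1 with h5 | h5
  · simp [term₃, inv_pow, h5]
  simp only [term₃, inv_pow]
  field_simp
  ring

end Terms

theorem eq_add_terms (u v : ℂ) : Est u v = term₁ u v + term₂ u v + term₃ (u * v) := by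
  rw [Est, term₁, term₂, term₃]
  ring

end Est

theorem Est_poincare_duality_general (u v : ℂ) (hu : u ≠ 0) (hv : v ≠ 0)
    (h1 : u * v ≠ 1) (h2 : u * v ≠ -1) :
    Est u v = (u * v) ^ 6 * Est u⁻¹ v⁻¹ := by
  have h₁ := Est.term₁_duality u v hu hv h1 h2
  have h₂ := Est.term₂_duality u v hu hv h1 h2
  have h₃ := Est.term₃_duality (u * v)
  rw [mul_inv] at h₃
  rw [Est.eq_add_terms, Est.eq_add_terms]
  linear_combination -(h₁ + h₂ + h₃)

/-- Poincaré duality for the stringy E-function: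
E(u,v) = (uv)⁶ · E(u⁻¹,v⁻¹). -/
theorem Est_poincare_duality (u v : ℂ) (hu : u ≠ 0) (hv : v ≠ 0)
    (h1 : u * v ≠ 1) (h2 : u * v ≠ -1) (h5 : (u * v) ^ 5 ≠ 1) :
    Est u v = (u * v) ^ 6 * Est u⁻¹ v⁻¹ :=
  Est_poincare_duality_general u v hu hv h1 h2
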